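/- Sufficient representation lower bound (discrete form): let X, X', Z, Z' be finite-valued random variables such that I(X'; Z | X) = 0 and I(Z; Z' | X') = 0, and such that Z and Z' take values in the same finite set; assume that for every x' with P(X'=x') > 0 and every z, P(Z'=z | X'=x') > 0 whenever P(Z=z, X'=x') > 0. Then I(Z; X') - I(Z; X | X') ≥ I(Z; Z') - E_{(x,x')∼(X,X')}[ D_KL( P(Z ∈ · | X=x) ‖ P(Z' ∈ · | X'=x') ) ]. -/

import Mathlib

/-
Discrete probability setup: a finite sample space `Ω` with weight function `p`
(nonnegative, summing to 1).  Random variables are functions out of `Ω` into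
nonempty finite sets.  `pr p X x = P(X = x)`, `ent` is Shannon entropy
(natural log, with `0 · log 0 = 0` since `Real.log 0 = 0`), `mi` is mutual
information `I(X;Y) = H(X) + H(Y) - H(X,Y)`, and `cmi` is conditional mutual
information `I(X;Y|W) = ∑ w, P(W=w) · I(X;Y | W=w)` computed with respect to
the conditional distribution `condp p W w` (terms with `P(W=w)=0` vanish).
`klDivF` is the discrete Kullback–Leibler divergence with the convention that
terms with `p s = 0` contribute `0` (indeed `0 * log 0 = 0` in Lean).
-/

open scoped Classical
open Finset

noncomputable def pr {Ω α : Type*} [Fintype Ω] (p : Ω → ℝ) (X : Ω → α) (x : α) : ℝ :=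
  ∑ ω, if X ω = x then p ω else 0

noncomputable def ent {Ω α : Type*} [Fintype Ω] [Fintype α] (p : Ω → ℝ) (X : Ω → α) : ℝ :=
  -∑ x, pr p X x * Real.log (pr p X x)

noncomputable def mi {Ω α β : Type*} [Fintype Ω] [Fintype α] [Fintype β]
    (p : Ω → ℝ) (X : Ω → α) (Y : Ω → β) : ℝ :=
  ent p X + ent p Y - ent p (fun ω => (X ω, Y ω))

noncomputable def condp {Ω γ : Type*} [Fintype Ω] (p : Ω → ℝ) (W : Ω → γ) (w : γ) : Ω → ℝ :=
  fun ω => if W ω = w then p ω / pr p W w else 0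

noncomputable def cmi {Ω α β γ : Type*} [Fintype Ω] [Fintype α] [Fintype β] [Fintype γ]
    (p : Ω → ℝ) (X : Ω → α) (Y : Ω → β) (W : Ω → γ) : ℝ :=
  ∑ w, pr p W w * mi (condp p W w) X Y

noncomputable def klDivF {S : Type*} [Fintype S] (p q : S → ℝ) : ℝ :=
  ∑ s, p s * Real.log (p s / q s)

set_option linter.unusedSectionVars false

section Basic
variable {Ω α β γ : Type*} [Fintype Ω] [Fintype α] [Fintype β] [Fintype γ]
variable (p : Ω → ℝ)

lemma pr_nonneg (hp : ∀ ω, 0 ≤ p ω) (X : Ω → α) (x : α) : 0 ≤ pr p X x := by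
  apply Finset.sum_nonneg; intro ω _; split <;> simp [hp ω]

lemma pr_total (X : Ω → α) : ∑ x, pr p X x = ∑ ω, p ω := by
  unfold pr
  rw [Finset.sum_comm]
  refine Finset.sum_congr rfl fun ω _ => ?_
  simp

lemma pr_term_le (hp : ∀ ω, 0 ≤ p ω) (X : Ω → α) (ω : Ω) : p ω ≤ pr p X (X ω) := by
  rw [pr]
  have := Finset.single_le_sum (f := fun ω' => if X ω' = X ω then p ω' else 0)
    (fun ω' _ => by split <;> simp [hp ω']) (Finset.mem_univ ω)
  simpa using this

/-- Grouping: Ω-level sums against value-level sums. -/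
lemma sum_pr_mul (F : Ω → α) (f : α → ℝ) :
    ∑ ω, p ω * f (F ω) = ∑ v, pr p F v * f v := by
  have : ∀ ω, p ω * f (F ω) = ∑ v, (if F ω = v then p ω else 0) * f v := by
    intro ω
    rw [Finset.sum_eq_single (F ω)]
    · simp
    · intro v _ hv; simp [Ne.symm, hv]
    · simp
  simp_rw [this]
  rw [Finset.sum_comm]
  unfold pr
  refine Finset.sum_congr rfl fun v _ => ?_
  rw [Finset.sum_mul]


/-- Marginalization through a map. -/
lemma pr_comp (F : Ω → α) (g : α → β) (u : β) :
    pr p (fun ω => g (F ω)) u = ∑ v, if g v = u then pr p F v else 0 := by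
  have h : ∀ ω, (if g (F ω) = u then p ω else 0)
      = p ω * (if g (F ω) = u then (1:ℝ) else 0) := by
    intro ω; split <;> simp
  calc pr p (fun ω => g (F ω)) u = ∑ ω, p ω * (if g (F ω) = u then (1:ℝ) else 0) := by
        unfold pr; exact Finset.sum_congr rfl fun ω _ => h ω
    _ = ∑ v, pr p F v * (if g v = u then (1:ℝ) else 0) :=
        sum_pr_mul p F (fun v => if g v = u then (1:ℝ) else 0)
    _ = ∑ v, if g v = u then pr p F v else 0 := by
        refine Finset.sum_congr rfl fun v _ => ?_; split <;> simp

lemma pr_comp_le (hp : ∀ ω, 0 ≤ p ω) (F : Ω → α) (g : α → β) (v : α) :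
    pr p F v ≤ pr p (fun ω => g (F ω)) (g v) := by
  conv_rhs => rw [pr_comp p F g]
  have h0 : ∀ v' ∈ Finset.univ, (0:ℝ) ≤ if g v' = g v then pr p F v' else 0 := by
    intro v' _; split; exacts [pr_nonneg p hp F v', le_rfl]
  have := Finset.single_le_sum h0 (Finset.mem_univ v)
  rw [if_pos rfl] at this
  exact this

lemma pr_comp_inj (F : Ω → α) {g : α → β} (hg : Function.Injective g) (v : α) :
    pr p (fun ω => g (F ω)) (g v) = pr p F v := by
  unfold pr
  refine Finset.sum_congr rfl fun ω _ => ?_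
  congr 1
  simp [hg.eq_iff]

lemma ent_omega (F : Ω → α) :
    ent p F = -∑ ω, p ω * Real.log (pr p F (F ω)) := by
  rw [ent, sum_pr_mul p F (fun v => Real.log (pr p F v))]

lemma pr_condp (W : Ω → γ) (w : γ) (Y : Ω → α) (y : α) :
    pr (condp p W w) Y y = pr p (fun ω => (Y ω, W ω)) (y, w) / pr p W w := by
  unfold pr condp
  rw [Finset.sum_div]
  refine Finset.sum_congr rfl fun ω _ => ?_
  by_cases h1 : Y ω = y <;> by_cases h2 : W ω = w <;>
    simp [h1, h2, Prod.ext_iff, pr]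

lemma pr_fst (A : Ω → α) (B : Ω → β) (a : α) :
    ∑ b, pr p (fun ω => (A ω, B ω)) (a, b) = pr p A a := by
  unfold pr
  rw [Finset.sum_comm]
  refine Finset.sum_congr rfl fun ω _ => ?_
  by_cases h : A ω = a <;> simp [Prod.ext_iff, h, Finset.sum_ite_eq]

lemma pr_snd (A : Ω → α) (B : Ω → β) (b : β) :
    ∑ a, pr p (fun ω => (A ω, B ω)) (a, b) = pr p B b := by
  unfold pr
  rw [Finset.sum_comm]
  refine Finset.sum_congr rfl fun ω _ => ?_
  by_cases h : B ω = b <;> simp [Prod.ext_iff, h, Finset.sum_ite_eq]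

end Basic

section Gibbs
variable {S : Type*} [Fintype S]

lemma gibbs_term {a b : ℝ} (ha : 0 ≤ a) (hb : 0 ≤ b) (hab : b = 0 → a = 0) :
    a - b ≤ a * Real.log (a / b) := by
  rcases eq_or_lt_of_le ha with h | h
  · simp [← h, hb]
  · have hb' : 0 < b := by
      rcases eq_or_lt_of_le hb with h' | h'
      · exact absurd (hab h'.symm) (ne_of_gt h)
      · exact h'
    have := Real.log_le_sub_one_of_pos (show (0:ℝ) < b / a by positivity)
    have hlog : Real.log (a / b) = - Real.log (b / a) := by
      rw [← Real.log_inv]; congr 1; field_simp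
    have h2 : a * Real.log (b/a) ≤ a * (b/a - 1) :=
      mul_le_mul_of_nonneg_left this (le_of_lt h)
    rw [mul_sub, mul_div_cancel₀ _ (ne_of_gt h), mul_one] at h2
    rw [hlog, mul_neg]
    linarith

lemma gibbs (f g : S → ℝ) (hf : ∀ s, 0 ≤ f s) (hg : ∀ s, 0 ≤ g s)
    (hsupp : ∀ s, g s = 0 → f s = 0) :
    ∑ s, f s - ∑ s, g s ≤ ∑ s, f s * Real.log (f s / g s) := by
  rw [← Finset.sum_sub_distrib]
  exact Finset.sum_le_sum fun s _ => gibbs_term (hf s) (hg s) (hsupp s)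

lemma gibbs_eq (f g : S → ℝ) (hf : ∀ s, 0 ≤ f s) (hg : ∀ s, 0 ≤ g s)
    (hsupp : ∀ s, g s = 0 → f s = 0) (hsum : ∑ s, g s ≤ ∑ s, f s)
    (hD : ∑ s, f s * Real.log (f s / g s) ≤ 0) : ∀ s, f s = g s := by
  have hterm : ∀ s ∈ Finset.univ, (0:ℝ) ≤ f s * Real.log (f s / g s) - (f s - g s) := by
    intro s _
    linarith [gibbs_term (hf s) (hg s) (hsupp s)]
  have hsum0 : ∑ s, (f s * Real.log (f s / g s) - (f s - g s)) ≤ 0 := by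
    rw [Finset.sum_sub_distrib, Finset.sum_sub_distrib]
    linarith
  have hall : ∀ s ∈ Finset.univ, f s * Real.log (f s / g s) - (f s - g s) = 0 := by
    intro s hs
    have h1 := Finset.sum_nonneg hterm
    have := (Finset.sum_eq_zero_iff_of_nonneg hterm).mp (le_antisymm hsum0 h1)
    exact this s hs
  intro s
  have h0 := hall s (Finset.mem_univ s)
  rcases eq_or_lt_of_le (hf s) with h | h
  · rw [← h] at h0 ⊢
    simp at h0
    linarith [hg s]
  · have hgs : 0 < g s := by
      rcases eq_or_lt_of_le (hg s) with h' | h'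
      · exact absurd (hsupp s h'.symm) (ne_of_gt h)
      · exact h'
    by_contra hne
    have hx : g s / f s ≠ 1 := by
      intro hc
      apply hne
      field_simp at hc
      linarith
    have := Real.log_lt_sub_one_of_pos (show (0:ℝ) < g s / f s by positivity) hx
    have hlog : Real.log (f s / g s) = - Real.log (g s / f s) := by
      rw [← Real.log_inv]; congr 1; field_simp
    rw [hlog] at h0
    have : f s * Real.log (g s / f s) < f s * (g s / f s - 1) := by
      exact (mul_lt_mul_iff_right₀ h).mpr this
    rw [mul_sub, mul_div_cancel₀ _ (ne_of_gt h)] at this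
    nlinarith

end Gibbs

section Ent
variable {Ω α β γ : Type*} [Fintype Ω] [Fintype α] [Fintype β] [Fintype γ]
variable (p : Ω → ℝ)

lemma mi_omega (A : Ω → α) (B : Ω → β) :
    mi p A B = ∑ ω, p ω * (Real.log (pr p (fun ω' => (A ω', B ω')) (A ω, B ω))
      - Real.log (pr p A (A ω)) - Real.log (pr p B (B ω))) := by
  unfold mi
  rw [ent_omega, ent_omega, ent_omega]
  simp_rw [mul_sub, Finset.sum_sub_distrib]
  ring

lemma mi_kl (q : Ω → ℝ) (hq : ∀ ω, 0 ≤ q ω) (A : Ω → α) (B : Ω → β) :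
    mi q A B = ∑ ab : α × β, pr q (fun ω => (A ω, B ω)) ab *
      Real.log (pr q (fun ω => (A ω, B ω)) ab / (pr q A ab.1 * pr q B ab.2)) := by
  set J := pr q (fun ω => (A ω, B ω)) with hJ
  have e1 : ∑ ab : α × β, J ab * Real.log (pr q A ab.1)
      = ∑ a, pr q A a * Real.log (pr q A a) := by
    rw [Fintype.sum_prod_type]
    refine Finset.sum_congr rfl fun a _ => ?_
    dsimp only
    rw [← Finset.sum_mul, hJ, pr_fst]
  have e2 : ∑ ab : α × β, J ab * Real.log (pr q B ab.2)
      = ∑ b, pr q B b * Real.log (pr q B b) := by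
    rw [Fintype.sum_prod_type, Finset.sum_comm]
    refine Finset.sum_congr rfl fun b _ => ?_
    dsimp only
    rw [← Finset.sum_mul, hJ, pr_snd]
  have e3 : mi q A B = ∑ ab : α × β, J ab *
      (Real.log (J ab) - Real.log (pr q A ab.1) - Real.log (pr q B ab.2)) := by
    unfold mi ent
    simp_rw [mul_sub, Finset.sum_sub_distrib]
    rw [e1, e2]
    ring
  rw [e3]
  refine Finset.sum_congr rfl fun ab _ => ?_
  have h0 := pr_nonneg q hq (fun ω => (A ω, B ω)) ab
  rw [← hJ] at h0
  rcases eq_or_lt_of_le h0 with h | h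
  · rw [← h]; ring
  · have h' : 0 < pr q (fun ω => (A ω, B ω)) ab := by rw [← hJ]; exact h
    have hA : 0 < pr q A ab.1 :=
      lt_of_lt_of_le h' (pr_comp_le q hq (fun ω => (A ω, B ω)) Prod.fst ab)
    have hB : 0 < pr q B ab.2 :=
      lt_of_lt_of_le h' (pr_comp_le q hq (fun ω => (A ω, B ω)) Prod.snd ab)
    rw [Real.log_div (ne_of_gt h) (by positivity), Real.log_mul (ne_of_gt hA) (ne_of_gt hB)]
    ring

lemma mi_nonneg (q : Ω → ℝ) (hq : ∀ ω, 0 ≤ q ω) (hqs : ∑ ω, q ω ≤ 1)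
    (A : Ω → α) (B : Ω → β) : 0 ≤ mi q A B := by
  rw [mi_kl q hq A B]
  set J := pr q (fun ω => (A ω, B ω)) with hJ
  have hg := gibbs J (fun ab => pr q A ab.1 * pr q B ab.2)
    (fun ab => pr_nonneg q hq _ ab)
    (fun ab => mul_nonneg (pr_nonneg q hq _ _) (pr_nonneg q hq _ _))
    (fun ab hab => by
      by_contra hne
      have h : 0 < pr q (fun ω => (A ω, B ω)) ab := by
        rw [hJ] at hne
        exact lt_of_le_of_ne (pr_nonneg q hq _ ab) (Ne.symm hne)
      have hA : 0 < pr q A ab.1 :=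
        lt_of_lt_of_le h (pr_comp_le q hq (fun ω => (A ω, B ω)) Prod.fst ab)
      have hB : 0 < pr q B ab.2 :=
        lt_of_lt_of_le h (pr_comp_le q hq (fun ω => (A ω, B ω)) Prod.snd ab)
      nlinarith)
  have hJt : ∑ ab, J ab = ∑ ω, q ω := pr_total q _
  have hABt : ∑ ab : α × β, pr q A ab.1 * pr q B ab.2 = (∑ ω, q ω) * (∑ ω, q ω) := by
    calc ∑ ab : α × β, pr q A ab.1 * pr q B ab.2
        = ∑ a, ∑ b, pr q A a * pr q B b := by rw [Fintype.sum_prod_type]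
      _ = (∑ a, pr q A a) * (∑ b, pr q B b) := by rw [Finset.sum_mul_sum]
      _ = (∑ ω, q ω) * (∑ ω, q ω) := by rw [pr_total, pr_total]
  have ht0 : 0 ≤ ∑ ω, q ω := Finset.sum_nonneg fun ω _ => hq ω
  rw [hJt, hABt] at hg
  nlinarith [hg]

lemma condp_nonneg (hp : ∀ ω, 0 ≤ p ω) (W : Ω → γ) (w : γ) : ∀ ω, 0 ≤ condp p W w ω := by
  intro ω
  unfold condp
  split
  · exact div_nonneg (hp ω) (pr_nonneg p hp W w)
  · exact le_rfl

lemma condp_total (W : Ω → γ) (w : γ) : ∑ ω, condp p W w ω = pr p W w / pr p W w := by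
  unfold condp
  have h : pr p W w / pr p W w = ∑ ω, (if W ω = w then p ω else 0) / pr p W w := by
    rw [← Finset.sum_div]; rfl
  rw [h]
  refine Finset.sum_congr rfl fun ω _ => ?_
  split
  · rfl
  · rw [zero_div]

lemma cmi_nonneg (hp : ∀ ω, 0 ≤ p ω) (A : Ω → α) (B : Ω → β) (W : Ω → γ) :
    0 ≤ cmi p A B W := by
  unfold cmi
  refine Finset.sum_nonneg fun w _ => ?_
  refine mul_nonneg (pr_nonneg p hp W w) ?_
  refine mi_nonneg _ (condp_nonneg p hp W w) ?_ A B
  rw [condp_total]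
  by_cases h : pr p W w = 0
  · simp [h]
  · rw [div_self h]

lemma condent_omega (hp : ∀ ω, 0 ≤ p ω) (W : Ω → γ) (Y : Ω → α) :
    ∑ w, pr p W w * ent (condp p W w) Y
      = -∑ ω, p ω * Real.log (pr p (fun ω' => (Y ω', W ω')) (Y ω, W ω) / pr p W (W ω)) := by
  have hterm : ∀ w, pr p W w * ent (condp p W w) Y
      = -∑ ω, (if W ω = w then p ω * Real.log
          (pr p (fun ω' => (Y ω', W ω')) (Y ω, w) / pr p W w) else 0) := by
    intro w
    rw [ent_omega, mul_neg, Finset.mul_sum]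
    congr 1
    refine Finset.sum_congr rfl fun ω _ => ?_
    rw [← mul_assoc, pr_condp]
    show pr p W w * condp p W w ω * _ = _
    unfold condp
    by_cases h : W ω = w
    · rw [if_pos h, if_pos h]
      by_cases hw : pr p W w = 0
      · have hpω : p ω = 0 := by
          have h1 := pr_term_le p hp W ω
          rw [h, hw] at h1
          linarith [hp ω]
        simp [hpω, hw]
      · rw [mul_div_assoc']
        rw [mul_comm (pr p W w) (p ω), mul_div_assoc, div_self hw, mul_one]
    · rw [if_neg h, if_neg h, mul_zero, zero_mul]
  rw [Finset.sum_congr rfl fun w _ => hterm w]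
  rw [Finset.sum_neg_distrib]
  congr 1
  rw [Finset.sum_comm]
  refine Finset.sum_congr rfl fun ω _ => ?_
  rw [Finset.sum_ite_eq]
  simp


lemma cmi_omega (hp : ∀ ω, 0 ≤ p ω) (A : Ω → α) (B : Ω → β) (W : Ω → γ) :
    cmi p A B W = ∑ ω, p ω *
      (Real.log (pr p (fun ω' => ((A ω', B ω'), W ω')) ((A ω, B ω), W ω) / pr p W (W ω))
       - Real.log (pr p (fun ω' => (A ω', W ω')) (A ω, W ω) / pr p W (W ω))
       - Real.log (pr p (fun ω' => (B ω', W ω')) (B ω, W ω) / pr p W (W ω))) := by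
  unfold cmi mi
  have hsplit : ∀ w, pr p W w * (ent (condp p W w) A + ent (condp p W w) B - ent (condp p W w) fun ω => (A ω, B ω))
      = pr p W w * ent (condp p W w) A + pr p W w * ent (condp p W w) B
        - pr p W w * ent (condp p W w) (fun ω => (A ω, B ω)) := by intro w; ring
  rw [Finset.sum_congr rfl fun w _ => hsplit w]
  rw [Finset.sum_sub_distrib, Finset.sum_add_distrib]
  rw [condent_omega p hp W A, condent_omega p hp W B, condent_omega p hp W (fun ω => (A ω, B ω))]
  have : ∀ ω, p ω *
      (Real.log (pr p (fun ω' => ((A ω', B ω'), W ω')) ((A ω, B ω), W ω) / pr p W (W ω))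
       - Real.log (pr p (fun ω' => (A ω', W ω')) (A ω, W ω) / pr p W (W ω))
       - Real.log (pr p (fun ω' => (B ω', W ω')) (B ω, W ω) / pr p W (W ω)))
      = p ω * Real.log (pr p (fun ω' => ((A ω', B ω'), W ω')) ((A ω, B ω), W ω) / pr p W (W ω))
       - p ω * Real.log (pr p (fun ω' => (A ω', W ω')) (A ω, W ω) / pr p W (W ω))
       - p ω * Real.log (pr p (fun ω' => (B ω', W ω')) (B ω, W ω) / pr p W (W ω)) := by
    intro ω; ring
  rw [Finset.sum_congr rfl fun ω _ => this ω]
  rw [Finset.sum_sub_distrib, Finset.sum_sub_distrib]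
  ring

end Ent

section Main
variable {Ω α β γ : Type*} [Fintype Ω] [Fintype α] [Fintype β] [Fintype γ]

lemma pr_congr_iff (p : Ω → ℝ) {F : Ω → α} {G : Ω → β} {v : α} {u : β}
    (h : ∀ ω, F ω = v ↔ G ω = u) : pr p F v = pr p G u := by
  unfold pr
  exact Finset.sum_congr rfl fun ω _ => if_congr (h ω) rfl rfl

lemma partA (p : Ω → ℝ) (hp : ∀ ω, 0 ≤ p ω)
    (Z : Ω → α) (X' : Ω → β) (Z' : Ω → γ) (h₂ : cmi p Z Z' X' = 0) :
    mi p Z Z' ≤ mi p Z X' := by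
  have key : mi p Z X' + cmi p Z Z' X' = mi p Z Z' + cmi p Z X' Z' := by
    rw [mi_omega p Z X', mi_omega p Z Z', cmi_omega p hp Z Z' X', cmi_omega p hp Z X' Z',
        ← Finset.sum_add_distrib, ← Finset.sum_add_distrib]
    refine Finset.sum_congr rfl fun ω _ => ?_
    rcases eq_or_lt_of_le (hp ω) with h0 | h0
    · rw [← h0]; ring
    · rw [← mul_add, ← mul_add]
      congr 1
      have hzx' : 0 < pr p (fun ω' => (Z ω', X' ω')) (Z ω, X' ω) :=
        lt_of_lt_of_le h0 (pr_term_le p hp _ ω)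
      have hz : 0 < pr p Z (Z ω) := lt_of_lt_of_le h0 (pr_term_le p hp _ ω)
      have hx' : 0 < pr p X' (X' ω) := lt_of_lt_of_le h0 (pr_term_le p hp _ ω)
      have hzz' : 0 < pr p (fun ω' => (Z ω', Z' ω')) (Z ω, Z' ω) :=
        lt_of_lt_of_le h0 (pr_term_le p hp _ ω)
      have hz' : 0 < pr p Z' (Z' ω) := lt_of_lt_of_le h0 (pr_term_le p hp _ ω)
      have hzz'x' : 0 < pr p (fun ω' => ((Z ω', Z' ω'), X' ω')) ((Z ω, Z' ω), X' ω) :=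
        lt_of_lt_of_le h0 (pr_term_le p hp _ ω)
      have hz'x' : 0 < pr p (fun ω' => (Z' ω', X' ω')) (Z' ω, X' ω) :=
        lt_of_lt_of_le h0 (pr_term_le p hp _ ω)
      have hzx'z' : 0 < pr p (fun ω' => ((Z ω', X' ω'), Z' ω')) ((Z ω, X' ω), Z' ω) :=
        lt_of_lt_of_le h0 (pr_term_le p hp _ ω)
      have hx'z' : 0 < pr p (fun ω' => (X' ω', Z' ω')) (X' ω, Z' ω) :=
        lt_of_lt_of_le h0 (pr_term_le p hp _ ω)
      have e1 : pr p (fun ω' => ((Z ω', Z' ω'), X' ω')) ((Z ω, Z' ω), X' ω)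
          = pr p (fun ω' => ((Z ω', X' ω'), Z' ω')) ((Z ω, X' ω), Z' ω) := by
        refine pr_congr_iff p fun ω' => ?_
        simp only [Prod.ext_iff]
        tauto
      have e2 : pr p (fun ω' => (Z' ω', X' ω')) (Z' ω, X' ω)
          = pr p (fun ω' => (X' ω', Z' ω')) (X' ω, Z' ω) := by
        refine pr_congr_iff p fun ω' => ?_
        simp only [Prod.ext_iff]
        tauto
      rw [e1, e2]
      rw [Real.log_div (ne_of_gt (e1 ▸ hzz'x')) (ne_of_gt hx'),
          Real.log_div (ne_of_gt hzx') (ne_of_gt hx'),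
          Real.log_div (ne_of_gt (e2 ▸ hz'x')) (ne_of_gt hx'),
          Real.log_div (ne_of_gt hzx'z') (ne_of_gt hz'),
          Real.log_div (ne_of_gt hzz') (ne_of_gt hz'),
          Real.log_div (ne_of_gt hx'z') (ne_of_gt hz')]
      ring
  have hpos := cmi_nonneg p hp Z X' Z'
  linarith [key, h₂, hpos]

lemma logcalc (a b c d e f0 : ℝ) (ha : 0 < a) (hb : 0 < b) (hc : 0 < c)
    (hd : 0 < d) (he : 0 < e) (hf : 0 < f0) :
    Real.log ((a/b)/(c/d)) - (Real.log ((f0*a/b)/d) - Real.log (e/d) - Real.log (f0/d))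
      = Real.log ((e/d)/(c/d)) := by
  have e1 : Real.log ((a/b)/(c/d)) = Real.log a - Real.log b - (Real.log c - Real.log d) := by
    rw [Real.log_div (by positivity) (by positivity), Real.log_div ha.ne' hb.ne',
        Real.log_div hc.ne' hd.ne']
  have e2 : Real.log ((f0*a/b)/d)
      = Real.log f0 + Real.log a - Real.log b - Real.log d := by
    rw [Real.log_div (by positivity) hd.ne', Real.log_div (by positivity) hb.ne',
        Real.log_mul hf.ne' ha.ne']
  have e3 : Real.log (e/d) = Real.log e - Real.log d := Real.log_div he.ne' hd.ne'
  have e4 : Real.log (f0/d) = Real.log f0 - Real.log d := Real.log_div hf.ne' hd.ne'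
  have e5 : Real.log ((e/d)/(c/d)) = (Real.log e - Real.log d) - (Real.log c - Real.log d) := by
    rw [Real.log_div (by positivity) (by positivity), Real.log_div he.ne' hd.ne',
        Real.log_div hc.ne' hd.ne']
  rw [e1, e2, e3, e4, e5]
  ring

end Main


/-- sufficient representation lower bound, discrete form.
Assume `I(X'; Z | X) = 0`, `I(Z; Z' | X') = 0` (with `Z, Z'` taking values in
the same finite set), and `P(Z'=z | X'=x') > 0` whenever `P(X'=x') > 0` and
`P(Z=z, X'=x') > 0`.  Then
`I(Z; X') - I(Z; X | X') ≥ I(Z; Z') - E_{(x,x')}[D_KL(P(Z|X=x) ‖ P(Z'|X'=x'))]`. -/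
theorem sufficient_representation_lower_bound
    {Ω 𝒳 𝒳' 𝒵 : Type*} [Fintype Ω] [Fintype 𝒳] [Fintype 𝒳'] [Fintype 𝒵]
    [Nonempty 𝒳] [Nonempty 𝒳'] [Nonempty 𝒵]
    (p : Ω → ℝ) (hp : ∀ ω, 0 ≤ p ω) (hsum : ∑ ω, p ω = 1)
    (X : Ω → 𝒳) (X' : Ω → 𝒳') (Z Z' : Ω → 𝒵)
    (h₁ : cmi p X' Z X = 0)
    (h₂ : cmi p Z Z' X' = 0)
    (hsupp : ∀ x', 0 < pr p X' x' → ∀ z,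
      0 < pr p (fun ω => (Z ω, X' ω)) (z, x') →
      0 < pr p (fun ω => (Z' ω, X' ω)) (z, x') / pr p X' x') :
    mi p Z X' - cmi p Z X X' ≥
      mi p Z Z' -
        ∑ xx' : 𝒳 × 𝒳', pr p (fun ω => (X ω, X' ω)) xx' *
          klDivF (fun z => pr p (fun ω => (Z ω, X ω)) (z, xx'.1) / pr p X xx'.1)
            (fun z => pr p (fun ω => (Z' ω, X' ω)) (z, xx'.2) / pr p X' xx'.2) := by
  have hA : mi p Z Z' ≤ mi p Z X' := partA p hp Z X' Z' h₂
  -- ================== Part B ==================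
  -- Step 1: Markov property from h₁ via the equality case of Gibbs' inequality.
  have h1v : cmi p X' Z X = ∑ v : (𝒳' × 𝒵) × 𝒳, pr p (fun ω => ((X' ω, Z ω), X ω)) v *
      (Real.log (pr p (fun ω => ((X' ω, Z ω), X ω)) v / pr p X v.2)
        - Real.log (pr p (fun ω => (X' ω, X ω)) (v.1.1, v.2) / pr p X v.2)
        - Real.log (pr p (fun ω => (Z ω, X ω)) (v.1.2, v.2) / pr p X v.2)) := by
    rw [cmi_omega p hp X' Z X]
    exact sum_pr_mul p (fun ω => ((X' ω, Z ω), X ω)) (fun v =>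
      Real.log (pr p (fun ω => ((X' ω, Z ω), X ω)) v / pr p X v.2)
        - Real.log (pr p (fun ω => (X' ω, X ω)) (v.1.1, v.2) / pr p X v.2)
        - Real.log (pr p (fun ω => (Z ω, X ω)) (v.1.2, v.2) / pr p X v.2))
  have h2v : (∑ v : (𝒳' × 𝒵) × 𝒳, pr p (fun ω => ((X' ω, Z ω), X ω)) v *
      (Real.log (pr p (fun ω => ((X' ω, Z ω), X ω)) v / pr p X v.2)
        - Real.log (pr p (fun ω => (X' ω, X ω)) (v.1.1, v.2) / pr p X v.2)
        - Real.log (pr p (fun ω => (Z ω, X ω)) (v.1.2, v.2) / pr p X v.2)))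
      = ∑ v : (𝒳' × 𝒵) × 𝒳, pr p (fun ω => ((X' ω, Z ω), X ω)) v *
        Real.log (pr p (fun ω => ((X' ω, Z ω), X ω)) v / (pr p (fun ω => (X' ω, X ω)) (v.1.1, v.2) * pr p (fun ω => (Z ω, X ω)) (v.1.2, v.2) / pr p X v.2)) := by
    refine Finset.sum_congr rfl fun v _ => ?_
    rcases eq_or_lt_of_le (pr_nonneg p hp (fun ω => ((X' ω, Z ω), X ω)) v) with h | h
    · rw [← h]; ring
    · have ha : 0 < pr p (fun ω => (X' ω, X ω)) (v.1.1, v.2) :=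
        lt_of_lt_of_le h (pr_comp_le p hp (fun ω => ((X' ω, Z ω), X ω)) (fun u => (u.1.1, u.2)) v)
      have hb : 0 < pr p (fun ω => (Z ω, X ω)) (v.1.2, v.2) :=
        lt_of_lt_of_le h (pr_comp_le p hp (fun ω => ((X' ω, Z ω), X ω)) (fun u => (u.1.2, u.2)) v)
      have hc : 0 < pr p X v.2 :=
        lt_of_lt_of_le h (pr_comp_le p hp (fun ω => ((X' ω, Z ω), X ω)) (fun u => u.2) v)
      congr 1
      rw [Real.log_div h.ne' hc.ne', Real.log_div ha.ne' hc.ne', Real.log_div hb.ne' hc.ne',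
          Real.log_div h.ne' (by positivity), Real.log_div (by positivity) hc.ne',
          Real.log_mul ha.ne' hb.ne']
      ring
  have hνsum : (∑ v : (𝒳' × 𝒵) × 𝒳, pr p (fun ω => (X' ω, X ω)) (v.1.1, v.2) * pr p (fun ω => (Z ω, X ω)) (v.1.2, v.2) / pr p X v.2) ≤ 1 := by
    have c1 : (∑ v : (𝒳' × 𝒵) × 𝒳, pr p (fun ω => (X' ω, X ω)) (v.1.1, v.2) * pr p (fun ω => (Z ω, X ω)) (v.1.2, v.2) / pr p X v.2)
        = ∑ x, ∑ x', ∑ z, pr p (fun ω => (X' ω, X ω)) (x', x) * pr p (fun ω => (Z ω, X ω)) (z, x) / pr p X x := by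
      rw [Fintype.sum_prod_type]
      rw [Finset.sum_comm]
      refine Finset.sum_congr rfl fun x _ => ?_
      rw [Fintype.sum_prod_type]
    have c3 : ∀ x, (∑ x', ∑ z, pr p (fun ω => (X' ω, X ω)) (x', x) * pr p (fun ω => (Z ω, X ω)) (z, x) / pr p X x)
        = pr p X x * pr p X x / pr p X x := by
      intro x
      have inner : ∀ x', (∑ z, pr p (fun ω => (X' ω, X ω)) (x', x) * pr p (fun ω => (Z ω, X ω)) (z, x) / pr p X x)
          = pr p (fun ω => (X' ω, X ω)) (x', x) * pr p X x / pr p X x := by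
        intro x'
        rw [← Finset.sum_div, ← Finset.mul_sum, pr_snd]
      rw [Finset.sum_congr rfl fun x' _ => inner x']
      rw [← Finset.sum_div, ← Finset.sum_mul, pr_snd]
    rw [c1, Finset.sum_congr rfl fun x _ => c3 x]
    have c4 : ∀ x : 𝒳, pr p X x * pr p X x / pr p X x ≤ pr p X x := by
      intro x
      rcases eq_or_ne (pr p X x) 0 with h | h
      · rw [h]; simp
      · rw [mul_div_assoc, div_self h, mul_one]
    calc (∑ x, pr p X x * pr p X x / pr p X x) ≤ ∑ x, pr p X x :=
          Finset.sum_le_sum fun x _ => c4 x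
      _ = 1 := by rw [pr_total, hsum]
  have hMar0 : ∀ v : (𝒳' × 𝒵) × 𝒳, pr p (fun ω => ((X' ω, Z ω), X ω)) v
      = pr p (fun ω => (X' ω, X ω)) (v.1.1, v.2) * pr p (fun ω => (Z ω, X ω)) (v.1.2, v.2) / pr p X v.2 := by
    refine gibbs_eq _ _ (fun v => pr_nonneg p hp _ v)
      (fun v => div_nonneg (mul_nonneg (pr_nonneg p hp _ _) (pr_nonneg p hp _ _))
        (pr_nonneg p hp _ _)) ?_ ?_ ?_
    · -- support
      intro v hv
      by_contra hne
      have h : 0 < pr p (fun ω => ((X' ω, Z ω), X ω)) v :=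
        lt_of_le_of_ne (pr_nonneg p hp _ v) (Ne.symm hne)
      have ha : 0 < pr p (fun ω => (X' ω, X ω)) (v.1.1, v.2) :=
        lt_of_lt_of_le h (pr_comp_le p hp (fun ω => ((X' ω, Z ω), X ω)) (fun u => (u.1.1, u.2)) v)
      have hb : 0 < pr p (fun ω => (Z ω, X ω)) (v.1.2, v.2) :=
        lt_of_lt_of_le h (pr_comp_le p hp (fun ω => ((X' ω, Z ω), X ω)) (fun u => (u.1.2, u.2)) v)
      have hc : 0 < pr p X v.2 :=
        lt_of_lt_of_le h (pr_comp_le p hp (fun ω => ((X' ω, Z ω), X ω)) (fun u => u.2) v)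
      have : 0 < pr p (fun ω => (X' ω, X ω)) (v.1.1, v.2) * pr p (fun ω => (Z ω, X ω)) (v.1.2, v.2) / pr p X v.2 := by positivity
      rw [hv] at this
      exact lt_irrefl 0 this
    · -- sums
      calc (∑ v : (𝒳' × 𝒵) × 𝒳, pr p (fun ω => (X' ω, X ω)) (v.1.1, v.2) * pr p (fun ω => (Z ω, X ω)) (v.1.2, v.2) / pr p X v.2) ≤ 1 := hνsum
        _ = ∑ v : (𝒳' × 𝒵) × 𝒳, pr p (fun ω => ((X' ω, Z ω), X ω)) v := by rw [pr_total, hsum]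
    · -- D = 0
      rw [← h2v, ← h1v, h₁]
  -- transfer to the (𝒵 × 𝒳) × 𝒳' shape
  have hMT : ∀ v : (𝒵 × 𝒳) × 𝒳', pr p (fun ω => ((Z ω, X ω), X' ω)) v
      = pr p (fun ω => (X ω, X' ω)) (v.1.2, v.2) * pr p (fun ω => (Z ω, X ω)) v.1 / pr p X v.1.2 := by
    intro v
    have hTS : pr p (fun ω => ((Z ω, X ω), X' ω)) v = pr p (fun ω => ((X' ω, Z ω), X ω)) ((v.2, v.1.1), v.1.2) := by
      refine pr_congr_iff p fun ω => ?_
      simp only [Prod.ext_iff]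
      tauto
    have hXX : pr p (fun ω => (X' ω, X ω)) (v.2, v.1.2) = pr p (fun ω => (X ω, X' ω)) (v.1.2, v.2) := by
      refine pr_congr_iff p fun ω => ?_
      simp only [Prod.ext_iff]
      tauto
    rw [hTS, hMar0 ((v.2, v.1.1), v.1.2)]
    dsimp only
    rw [hXX]
  -- value form of cmi Z X X'
  have hcmi2 : cmi p Z X X' = ∑ v : (𝒵 × 𝒳) × 𝒳', pr p (fun ω => ((Z ω, X ω), X' ω)) v *
      (Real.log (pr p (fun ω => ((Z ω, X ω), X' ω)) v / pr p X' v.2)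
        - Real.log (pr p (fun ω => (Z ω, X' ω)) (v.1.1, v.2) / pr p X' v.2)
        - Real.log (pr p (fun ω => (X ω, X' ω)) (v.1.2, v.2) / pr p X' v.2)) := by
    rw [cmi_omega p hp Z X X']
    exact sum_pr_mul p (fun ω => ((Z ω, X ω), X' ω)) (fun v =>
      Real.log (pr p (fun ω => ((Z ω, X ω), X' ω)) v / pr p X' v.2)
        - Real.log (pr p (fun ω => (Z ω, X' ω)) (v.1.1, v.2) / pr p X' v.2)
        - Real.log (pr p (fun ω => (X ω, X' ω)) (v.1.2, v.2) / pr p X' v.2))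
  -- value form of the expected KL divergence
  have hEKL : (∑ xx' : 𝒳 × 𝒳', pr p (fun ω => (X ω, X' ω)) xx' *
          klDivF (fun z => pr p (fun ω => (Z ω, X ω)) (z, xx'.1) / pr p X xx'.1)
            (fun z => pr p (fun ω => (Z' ω, X' ω)) (z, xx'.2) / pr p X' xx'.2))
      = ∑ v : (𝒵 × 𝒳) × 𝒳', pr p (fun ω => ((Z ω, X ω), X' ω)) v *
          Real.log ((pr p (fun ω => (Z ω, X ω)) v.1 / pr p X v.1.2) / (pr p (fun ω => (Z' ω, X' ω)) (v.1.1, v.2) / pr p X' v.2)) := by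
    have r1 : (∑ xx' : 𝒳 × 𝒳', pr p (fun ω => (X ω, X' ω)) xx' *
          klDivF (fun z => pr p (fun ω => (Z ω, X ω)) (z, xx'.1) / pr p X xx'.1)
            (fun z => pr p (fun ω => (Z' ω, X' ω)) (z, xx'.2) / pr p X' xx'.2))
        = ∑ x, ∑ x', ∑ z, pr p (fun ω => (X ω, X' ω)) (x, x') * ((pr p (fun ω => (Z ω, X ω)) (z, x) / pr p X x) *
            Real.log ((pr p (fun ω => (Z ω, X ω)) (z, x) / pr p X x) / (pr p (fun ω => (Z' ω, X' ω)) (z, x') / pr p X' x'))) := by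
      rw [Fintype.sum_prod_type]
      refine Finset.sum_congr rfl fun x _ => Finset.sum_congr rfl fun x' _ => ?_
      dsimp only
      unfold klDivF
      rw [Finset.mul_sum]
    have r2 : (∑ v : (𝒵 × 𝒳) × 𝒳', pr p (fun ω => ((Z ω, X ω), X' ω)) v *
          Real.log ((pr p (fun ω => (Z ω, X ω)) v.1 / pr p X v.1.2) / (pr p (fun ω => (Z' ω, X' ω)) (v.1.1, v.2) / pr p X' v.2)))
        = ∑ x, ∑ x', ∑ z, pr p (fun ω => ((Z ω, X ω), X' ω)) ((z, x), x') *
            Real.log ((pr p (fun ω => (Z ω, X ω)) (z, x) / pr p X x) / (pr p (fun ω => (Z' ω, X' ω)) (z, x') / pr p X' x')) := by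
      rw [Fintype.sum_prod_type, Fintype.sum_prod_type, Finset.sum_comm]
      exact Finset.sum_congr rfl fun x _ => Finset.sum_comm
    rw [r1, r2]
    refine Finset.sum_congr rfl fun x _ => Finset.sum_congr rfl fun x' _ =>
      Finset.sum_congr rfl fun z _ => ?_
    rw [hMT ((z, x), x')]
    ring
  -- difference of the two value forms
  have hdiff : (∑ xx' : 𝒳 × 𝒳', pr p (fun ω => (X ω, X' ω)) xx' *
          klDivF (fun z => pr p (fun ω => (Z ω, X ω)) (z, xx'.1) / pr p X xx'.1)
            (fun z => pr p (fun ω => (Z' ω, X' ω)) (z, xx'.2) / pr p X' xx'.2)) - cmi p Z X X'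
      = ∑ u : 𝒵 × 𝒳', pr p (fun ω => (Z ω, X' ω)) u *
          Real.log ((pr p (fun ω => (Z ω, X' ω)) u / pr p X' u.2) / (pr p (fun ω => (Z' ω, X' ω)) u / pr p X' u.2)) := by
    rw [hEKL, hcmi2, ← Finset.sum_sub_distrib]
    have step : ∀ v : (𝒵 × 𝒳) × 𝒳', (pr p (fun ω => ((Z ω, X ω), X' ω)) v *
          Real.log ((pr p (fun ω => (Z ω, X ω)) v.1 / pr p X v.1.2) / (pr p (fun ω => (Z' ω, X' ω)) (v.1.1, v.2) / pr p X' v.2))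
        - pr p (fun ω => ((Z ω, X ω), X' ω)) v * (Real.log (pr p (fun ω => ((Z ω, X ω), X' ω)) v / pr p X' v.2)
            - Real.log (pr p (fun ω => (Z ω, X' ω)) (v.1.1, v.2) / pr p X' v.2)
            - Real.log (pr p (fun ω => (X ω, X' ω)) (v.1.2, v.2) / pr p X' v.2)))
        = pr p (fun ω => ((Z ω, X ω), X' ω)) v * Real.log ((pr p (fun ω => (Z ω, X' ω)) (v.1.1, v.2) / pr p X' v.2)
            / (pr p (fun ω => (Z' ω, X' ω)) (v.1.1, v.2) / pr p X' v.2)) := by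
      intro v
      rcases eq_or_lt_of_le (pr_nonneg p hp (fun ω => ((Z ω, X ω), X' ω)) v) with h | h
      · rw [← h]; ring
      · have ha : 0 < pr p (fun ω => (Z ω, X ω)) v.1 :=
          lt_of_lt_of_le h (pr_comp_le p hp (fun ω => ((Z ω, X ω), X' ω)) (fun u => u.1) v)
        have hb : 0 < pr p X v.1.2 :=
          lt_of_lt_of_le h (pr_comp_le p hp (fun ω => ((Z ω, X ω), X' ω)) (fun u => u.1.2) v)
        have hd : 0 < pr p X' v.2 :=
          lt_of_lt_of_le h (pr_comp_le p hp (fun ω => ((Z ω, X ω), X' ω)) (fun u => u.2) v)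
        have he : 0 < pr p (fun ω => (Z ω, X' ω)) (v.1.1, v.2) :=
          lt_of_lt_of_le h (pr_comp_le p hp (fun ω => ((Z ω, X ω), X' ω)) (fun u => (u.1.1, u.2)) v)
        have hf : 0 < pr p (fun ω => (X ω, X' ω)) (v.1.2, v.2) :=
          lt_of_lt_of_le h (pr_comp_le p hp (fun ω => ((Z ω, X ω), X' ω)) (fun u => (u.1.2, u.2)) v)
        have hq : 0 < pr p (fun ω => (Z' ω, X' ω)) (v.1.1, v.2) / pr p X' v.2 := hsupp v.2 hd v.1.1 he
        have hc : 0 < pr p (fun ω => (Z' ω, X' ω)) (v.1.1, v.2) := by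
          rcases div_pos_iff.mp hq with ⟨h1, _⟩ | ⟨_, h2⟩
          · exact h1
          · exact absurd hd (not_lt_of_gt h2)
        rw [hMT v, ← mul_sub]
        congr 1
        exact logcalc _ _ _ _ _ _ ha hb hc hd he hf
    rw [Finset.sum_congr rfl fun v _ => step v]
    exact (sum_pr_mul p (fun ω => ((Z ω, X ω), X' ω)) (fun u =>
        Real.log ((pr p (fun ω => (Z ω, X' ω)) (u.1.1, u.2) / pr p X' u.2) / (pr p (fun ω => (Z' ω, X' ω)) (u.1.1, u.2) / pr p X' u.2)))).symm.trans
      (sum_pr_mul p (fun ω => (Z ω, X' ω)) (fun u =>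
        Real.log ((pr p (fun ω => (Z ω, X' ω)) u / pr p X' u.2) / (pr p (fun ω => (Z' ω, X' ω)) u / pr p X' u.2))))
  -- final Gibbs inequality
  have hfin : 0 ≤ ∑ u : 𝒵 × 𝒳', pr p (fun ω => (Z ω, X' ω)) u *
      Real.log ((pr p (fun ω => (Z ω, X' ω)) u / pr p X' u.2) / (pr p (fun ω => (Z' ω, X' ω)) u / pr p X' u.2)) := by
    have step : ∀ u : 𝒵 × 𝒳', pr p (fun ω => (Z ω, X' ω)) u *
        Real.log ((pr p (fun ω => (Z ω, X' ω)) u / pr p X' u.2) / (pr p (fun ω => (Z' ω, X' ω)) u / pr p X' u.2))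
        = pr p (fun ω => (Z ω, X' ω)) u * Real.log (pr p (fun ω => (Z ω, X' ω)) u / pr p (fun ω => (Z' ω, X' ω)) u) := by
      intro u
      rcases eq_or_lt_of_le (pr_nonneg p hp (fun ω => (Z ω, X' ω)) u) with h | h
      · rw [← h]; ring
      · have hXp : 0 < pr p X' u.2 :=
          lt_of_lt_of_le h (pr_comp_le p hp (fun ω => (Z ω, X' ω)) (fun u => u.2) u)
        have hq : 0 < pr p (fun ω => (Z' ω, X' ω)) u / pr p X' u.2 := hsupp u.2 hXp u.1 h
        have hc : 0 < pr p (fun ω => (Z' ω, X' ω)) u := by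
          rcases div_pos_iff.mp hq with ⟨h1, _⟩ | ⟨_, h2⟩
          · exact h1
          · exact absurd hXp (not_lt_of_gt h2)
        congr 1
        have h1 : pr p X' u.2 ≠ 0 := hXp.ne'
        have h2 : pr p (fun ω => (Z' ω, X' ω)) u ≠ 0 := hc.ne'
        field_simp
    rw [Finset.sum_congr rfl fun u _ => step u]
    have hg := gibbs (pr p (fun ω => (Z ω, X' ω))) (pr p (fun ω => (Z' ω, X' ω))) (fun u => pr_nonneg p hp _ u) (fun u => pr_nonneg p hp _ u)
      (fun u hu => by
        by_contra hne
        have h : 0 < pr p (fun ω => (Z ω, X' ω)) u :=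
          lt_of_le_of_ne (pr_nonneg p hp _ u) (Ne.symm hne)
        have hXp : 0 < pr p X' u.2 :=
          lt_of_lt_of_le h (pr_comp_le p hp (fun ω => (Z ω, X' ω)) (fun u => u.2) u)
        have hq : 0 < pr p (fun ω => (Z' ω, X' ω)) u / pr p X' u.2 := hsupp u.2 hXp u.1 h
        rw [hu, zero_div] at hq
        exact lt_irrefl 0 hq)
    have ht1 : (∑ u : 𝒵 × 𝒳', pr p (fun ω => (Z ω, X' ω)) u) = 1 := by rw [pr_total, hsum]
    have ht2 : (∑ u : 𝒵 × 𝒳', pr p (fun ω => (Z' ω, X' ω)) u) = 1 := by rw [pr_total, hsum]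
    rw [ht1, ht2] at hg
    linarith
  linarith [hdiff, hfin, hA]
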